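/- arXiv:1711.08815 — 2 statements merged into one kernel-verified Lean document; each statement's English description precedes it below -/
import Mathlib

section
/- In the randomly oriented complete binary tree T_n of height n with parameter p ∈ [0,1], let ℓ_max^{(n)} = max({0} ∪ {ℓ(v) : v ∈ V_n, Y_v holds}) be the maximum level reached by water in downwards percolation. Then for every k with 1 ≤ k ≤ n, P(ℓ_max^{(n)} < k) = (1 − ρ_k(p))^{2^{n−k}}. -/
open MeasureTheory ProbabilityTheory Finset
open scoped Classical

/-- Vertices of the complete binary tree of height `n`: words over `{0,1}`
of length at most `n`.  The empty word is the root; words of length `n`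
are the leaves; the level of `v` is `n - |v|`. -/
def Vtx (n : ℕ) : Type := {l : List Bool // l.length ≤ n}

/-- Edges of the complete binary tree of height `n`, indexed by the nonempty
words of length at most `n`: the edge joins such a word to its predecessor
(the word obtained by deleting the last letter). -/
def Edg (n : ℕ) : Type := {l : List Bool // l ≠ [] ∧ l.length ≤ n}

noncomputable instance (n : ℕ) : Fintype (Vtx n) := by
  apply Fintype.ofInjective (fun v : Vtx n => fun i : Fin (n + 1) => v.1[i.1]?)
  intro u v h
  apply Subtype.ext
  apply List.ext_getElem?
  intro m
  by_cases hm : m < n + 1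
  · exact congrFun h ⟨m, hm⟩
  · have hu := u.2
    have hv := v.2
    rw [List.getElem?_eq_none_iff.2, List.getElem?_eq_none_iff.2] <;> omega

noncomputable instance (n : ℕ) : Fintype (Edg n) := by
  apply Fintype.ofInjective (fun v : Edg n => fun i : Fin (n + 1) => v.1[i.1]?)
  intro u v h
  apply Subtype.ext
  apply List.ext_getElem?
  intro m
  by_cases hm : m < n + 1
  · exact congrFun h ⟨m, hm⟩
  · have hu := u.2.2
    have hv := v.2.2
    rw [List.getElem?_eq_none_iff.2, List.getElem?_eq_none_iff.2] <;> omega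

/-- The Bernoulli measure on `Bool`: `true` has probability `p`,
`false` has probability `1 - p`. -/
noncomputable def bern (p : ℝ) : Measure Bool :=
  (ENNReal.ofReal p) • Measure.dirac true + (ENNReal.ofReal (1 - p)) • Measure.dirac false

instance (p : ℝ) : IsFiniteMeasure (bern p) := by
  constructor
  simp only [bern, Measure.add_apply, Measure.smul_apply, smul_eq_mul]
  exact ENNReal.add_lt_top.mpr
    ⟨ENNReal.mul_lt_top ENNReal.ofReal_lt_top (by simp),
     ENNReal.mul_lt_top ENNReal.ofReal_lt_top (by simp)⟩

/-- The random orientation measure on the complete binary tree of height `n`: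
each edge is oriented towards the root (coordinate `true`) with probability `p`,
independently of the other edges. -/
noncomputable def treeMeasure (n : ℕ) (p : ℝ) : Measure (Edg n → Bool) :=
  Measure.pi fun _ => bern p

/-- One oriented step in the configuration `ω`: `a → b` if the tree edge between
`a` and `b` is oriented from `a` to `b` (coordinate `true` means oriented towards
the root, i.e. towards the shorter word). -/
def TStep {n : ℕ} (ω : Edg n → Bool) (a b : Vtx n) : Prop :=
  ∃ e : Edg n, (ω e = true ∧ e.1 = a.1 ∧ b.1 = e.1.dropLast) ∨
    (ω e = false ∧ e.1 = b.1 ∧ a.1 = e.1.dropLast)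

/-- `X v`: the event that water, pumped into the leaves, reaches `v`, i.e. there is
a directed path from some leaf to `v`. -/
def Xwet {n : ℕ} (v : Vtx n) : Set (Edg n → Bool) :=
  {ω | ∃ w : Vtx n, w.1.length = n ∧ Relation.ReflTransGen (TStep ω) w v}

/-- `Y v`: the event that `v` gets wet in downwards percolation: there is a leaf `w`
above `v` such that every edge on the path from `w` down to `v` is oriented
towards the root. -/
def Ydown {n : ℕ} (v : Vtx n) : Set (Edg n → Bool) :=
  {ω | ∃ w : List Bool, w.length = n ∧ v.1 <+: w ∧
    ∀ u : Edg n, u.1 <+: w → v.1.length < u.1.length → ω u = true}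

/-- The recursion `ρ₀ = 1`, `ρ_{k+1} = 2 p ρ_k - (p ρ_k)²`. -/
noncomputable def rho (p : ℝ) : ℕ → ℝ
  | 0 => 1
  | k + 1 => 2 * p * rho p k - (p * rho p k) ^ 2

/-- `α^{(n)}_k`, the probability that water reaches a level-`k` vertex from below. -/
noncomputable def alpha (p : ℝ) (n k : ℕ) : ℝ :=
  (1 - p) * p * ∑ i ∈ Finset.range (n - k),
    (1 - p) ^ i * rho p (k + i) * ∏ j ∈ Finset.range i, (1 - p * rho p (k + j))

/-- The size of the percolation cluster `C_n` (leaves excluded). -/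
noncomputable def clusterSize (n : ℕ) (ω : Edg n → Bool) : ℕ :=
  Nat.card {v : Vtx n // v.1.length < n ∧ ω ∈ Xwet v}

/-- The size of the downwards percolation cluster `C↓_n` (leaves excluded). -/
noncomputable def downClusterSize (n : ℕ) (ω : Edg n → Bool) : ℕ :=
  Nat.card {v : Vtx n // v.1.length < n ∧ ω ∈ Ydown v}

/-- The maximum level reached by water in downwards percolation. -/
noncomputable def maxLevel (n : ℕ) (ω : Edg n → Bool) : ℕ :=
  sSup ({0} ∪ {k | ∃ v : Vtx n, ω ∈ Ydown v ∧ n - v.1.length = k})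

/-- The root of the tree. -/
def root (n : ℕ) : Vtx n := ⟨[], by simp⟩


lemma measurableSet_all' {ι : Type*} [Finite ι] (A : Set (ι → Bool)) : MeasurableSet A := by
  have h1 : ∀ ω : ι → Bool, MeasurableSet ({ω} : Set (ι → Bool)) := by
    intro ω
    have h : ({ω} : Set (ι → Bool)) = Set.pi Set.univ (fun i => {ω i}) := by
      ext x
      simp [Set.mem_univ_pi, funext_iff, eq_comm]
    rw [h]
    exact MeasurableSet.univ_pi (fun i => measurableSet_singleton _)
  have h : A = ⋃ ω ∈ A, {ω} := by simp
  rw [h]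
  exact MeasurableSet.biUnion (Set.to_countable A) (fun ω _ => h1 ω)

def DepOn {ι : Type*} (A : Set (ι → Bool)) (s : Set ι) : Prop :=
  ∀ ω ω' : ι → Bool, (∀ i ∈ s, ω i = ω' i) → (ω ∈ A ↔ ω' ∈ A)

lemma DepOn.mono {ι : Type*} {A : Set (ι → Bool)} {s t : Set ι} (h : DepOn A s) (hst : s ⊆ t) :
    DepOn A t := fun ω ω' hh => h ω ω' (fun i hi => hh i (hst hi))

lemma DepOn.compl {ι : Type*} {A : Set (ι → Bool)} {s : Set ι} (h : DepOn A s) : DepOn Aᶜ s :=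
  fun ω ω' hh => not_iff_not.2 (h ω ω' hh)

lemma DepOn.inter {ι : Type*} {A B : Set (ι → Bool)} {s : Set ι} (hA : DepOn A s)
    (hB : DepOn B s) : DepOn (A ∩ B) s :=
  fun ω ω' hh => and_congr (hA ω ω' hh) (hB ω ω' hh)

lemma DepOn.biInter {ι κ : Type*} {A : κ → Set (ι → Bool)} {s : κ → Set ι} (S : Finset κ)
    (h : ∀ v ∈ S, DepOn (A v) (s v)) : DepOn (⋂ v ∈ S, A v) (⋃ v ∈ S, s v) := by
  intro ω ω' hh
  simp only [Set.mem_iInter]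
  exact forall_congr' fun v => forall_congr' fun hv =>
    h v hv ω ω' (fun i hi => hh i (Set.mem_biUnion hv hi))

lemma pi_inter_eq_mul {ι : Type*} [Fintype ι] (μ : ι → Measure Bool)
    [∀ i, IsProbabilityMeasure (μ i)] {A B : Set (ι → Bool)} {s : Set ι}
    (hA : DepOn A s) (hB : DepOn B sᶜ) :
    Measure.pi μ (A ∩ B) = Measure.pi μ A * Measure.pi μ B := by
  classical
  set e := MeasurableEquiv.piEquivPiSubtypeProd (fun _ : ι => Bool) (· ∈ s) with he
  have hpres := measurePreserving_piEquivPiSubtypeProd (α := fun _ : ι => Bool) μ (· ∈ s)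
  set A' : Set ((i : {i // i ∈ s}) → Bool) := {x | ∃ ω ∈ A, ∀ i : {i // i ∈ s}, ω i.1 = x i}
    with hA'
  set B' : Set ((i : {i // ¬ i ∈ s}) → Bool) := {x | ∃ ω ∈ B, ∀ i : {i // ¬ i ∈ s}, ω i.1 = x i}
    with hB'
  have heA : ∀ ω : ι → Bool, (e ω).1 ∈ A' ↔ ω ∈ A := by
    intro ω
    constructor
    · rintro ⟨ω₀, hω₀, hagree⟩
      exact (hA ω₀ ω (fun i hi => hagree ⟨i, hi⟩)).1 hω₀
    · intro hω; exact ⟨ω, hω, fun i => rfl⟩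
  have heB : ∀ ω : ι → Bool, (e ω).2 ∈ B' ↔ ω ∈ B := by
    intro ω
    constructor
    · rintro ⟨ω₀, hω₀, hagree⟩
      exact (hB ω₀ ω (fun i hi => hagree ⟨i, hi⟩)).1 hω₀
    · intro hω; exact ⟨ω, hω, fun i => rfl⟩
  have hAe : A = e ⁻¹' (A' ×ˢ Set.univ) := by
    ext ω; simp [Set.mem_prod, heA ω]
  have hBe : B = e ⁻¹' (Set.univ ×ˢ B') := by
    ext ω; simp [Set.mem_prod, heB ω]
  have hABe : A ∩ B = e ⁻¹' (A' ×ˢ B') := by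
    ext ω; simp [Set.mem_prod, heA ω, heB ω]
  have mA' : MeasurableSet A' := measurableSet_all' _
  have mB' : MeasurableSet B' := measurableSet_all' _
  rw [hABe, hAe, hBe,
    hpres.measure_preimage (mA'.prod mB').nullMeasurableSet,
    hpres.measure_preimage (mA'.prod MeasurableSet.univ).nullMeasurableSet,
    hpres.measure_preimage (MeasurableSet.univ.prod mB').nullMeasurableSet,
    Measure.prod_prod, Measure.prod_prod, Measure.prod_prod, measure_univ, measure_univ,
    mul_one, one_mul]

lemma bern_true {p : ℝ} : bern p {true} = ENNReal.ofReal p := by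
  simp [bern, Measure.dirac_apply]

lemma isProbabilityMeasure_bern {p : ℝ} (hp0 : 0 ≤ p) (hp1 : p ≤ 1) :
    IsProbabilityMeasure (bern p) := by
  constructor
  simp only [bern, Measure.add_apply, Measure.smul_apply, smul_eq_mul,
    Measure.dirac_apply, Set.mem_univ, Set.indicator_of_mem, Pi.one_apply, mul_one]
  rw [← ENNReal.ofReal_add hp0 (by linarith)]
  norm_num

lemma toReal_compl_prob {Ω : Type*} [MeasurableSpace Ω] (μ : Measure Ω)
    [IsProbabilityMeasure μ] {A : Set Ω} (hA : MeasurableSet A) :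
    (μ Aᶜ).toReal = 1 - (μ A).toReal := by
  rw [measure_compl hA (measure_ne_top _ _), measure_univ,
    ENNReal.toReal_sub_of_le prob_le_one ENNReal.one_ne_top, ENNReal.toReal_one]


lemma isProbabilityMeasure_tree {n : ℕ} {p : ℝ} (hp0 : 0 ≤ p) (hp1 : p ≤ 1) :
    IsProbabilityMeasure (treeMeasure n p) := by
  haveI := isProbabilityMeasure_bern hp0 hp1
  unfold treeMeasure; infer_instance

lemma treeMeasure_eq_pi (n : ℕ) (p : ℝ) :
    treeMeasure n p = Measure.pi (fun _ : Edg n => bern p) := rfl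

lemma prob_edge {n : ℕ} {p : ℝ} (hp0 : 0 ≤ p) (hp1 : p ≤ 1) (e₀ : Edg n) :
    treeMeasure n p {ω | ω e₀ = true} = ENNReal.ofReal p := by
  haveI := isProbabilityMeasure_bern hp0 hp1
  have h : {ω : Edg n → Bool | ω e₀ = true} =
      Set.pi Set.univ (fun e => if e = e₀ then {true} else Set.univ) := by
    ext ω
    simp only [Set.mem_setOf_eq, Set.mem_univ_pi]
    constructor
    · intro h e
      by_cases he : e = e₀
      · subst he; simp [h]
      · simp [he]
    · intro h
      have := h e₀
      simpa using this
  rw [h, treeMeasure, Measure.pi_pi]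
  rw [Finset.prod_eq_single e₀ (fun b _ hb => by rw [if_neg hb]; exact measure_univ)
    (fun h => absurd (Finset.mem_univ e₀) h)]
  simp [bern_true]

lemma depOn_Ydown {n : ℕ} (v : Vtx n) :
    DepOn (Ydown v) {e : Edg n | v.1 <+: e.1 ∧ v.1.length < e.1.length} := by
  intro ω ω' hh
  constructor <;> rintro ⟨w, hw, hvw, hcond⟩ <;> refine ⟨w, hw, hvw, fun u hu hlen => ?_⟩
  · rw [← hh u ⟨List.prefix_of_prefix_length_le hvw hu hlen.le, hlen⟩]
    exact hcond u hu hlen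
  · rw [hh u ⟨List.prefix_of_prefix_length_le hvw hu hlen.le, hlen⟩]
    exact hcond u hu hlen

lemma prob_Ydown {n : ℕ} {p : ℝ} (hp0 : 0 ≤ p) (hp1 : p ≤ 1) :
    ∀ (m : ℕ) (v : Vtx n), v.1.length + m = n →
      (treeMeasure n p (Ydown v)).toReal = rho p m := by
  haveI := isProbabilityMeasure_bern hp0 hp1
  haveI := isProbabilityMeasure_tree (n := n) hp0 hp1
  intro m
  induction m with
  | zero =>
    intro v hv
    have h : Ydown v = Set.univ := by
      ext ω
      simp only [Ydown, Set.mem_setOf_eq, Set.mem_univ, iff_true]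
      refine ⟨v.1, by omega, List.prefix_refl _, fun u hu hlen => ?_⟩
      have h1 := hu.length_le
      have h2 := u.2.2
      omega
    rw [h, measure_univ]
    simp [rho]
  | succ m ih =>
    intro v hv
    set c : Bool → Edg n := fun b => ⟨v.1 ++ [b], by simp,
      by simp only [List.length_append, List.length_cons, List.length_nil]; omega⟩ with hc
    set cv : Bool → Vtx n := fun b => ⟨v.1 ++ [b],
      by simp only [List.length_append, List.length_cons, List.length_nil]; omega⟩ with hcv
    set Z : Bool → Set (Edg n → Bool) := fun b => {ω | ω (c b) = true} ∩ Ydown (cv b) with hZ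
    have hclen : ∀ b, (cv b).1.length = v.1.length + 1 := by intro b; simp [hcv]
    have hdec : Ydown v = Z false ∪ Z true := by
      ext ω
      constructor
      · rintro ⟨w, hw, hvw, hcond⟩
        obtain ⟨t, rfl⟩ := hvw
        have ht : t ≠ [] := by
          intro h; rw [h] at hw; simp at hw; omega
        obtain ⟨b, t', rfl⟩ : ∃ b t', t = b :: t' :=
          ⟨t.head ht, t.tail, (List.cons_head_tail ht).symm⟩
        have hpre : (c b).1 <+: v.1 ++ b :: t' := ⟨t', by simp [hc]⟩
        have hedge : ω (c b) = true := hcond (c b) hpre (by simp [hc])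
        have hY : ω ∈ Ydown (cv b) := ⟨v.1 ++ b :: t', hw, by simpa [hcv] using hpre,
          fun u hu hl => hcond u hu (by rw [hclen b] at hl; omega)⟩
        cases b
        · exact Or.inl ⟨hedge, hY⟩
        · exact Or.inr ⟨hedge, hY⟩
      · intro hω
        obtain ⟨b, hedge, w, hw, hcw, hcond⟩ : ∃ b, ω ∈ Z b := by
          rcases hω with h | h
          exacts [⟨false, h⟩, ⟨true, h⟩]
        have hvw : v.1 <+: w := by
          refine List.IsPrefix.trans ?_ hcw
          exact ⟨[b], rfl⟩
        refine ⟨w, hw, hvw, fun u hu hl => ?_⟩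
        rcases Nat.lt_or_ge (v.1.length + 1) u.1.length with h | h
        · exact hcond u hu (by rw [hclen b]; omega)
        · have hul : u.1 = (cv b).1 := by
            refine (List.prefix_of_prefix_length_le hu hcw ?_).eq_of_length ?_
            · rw [hclen b]; omega
            · rw [hclen b]; omega
          have hue : u = c b := Subtype.ext (hul.trans rfl)
          rw [hue]; exact hedge
    have hZprob : ∀ b, (treeMeasure n p (Z b)).toReal = p * rho p m := by
      intro b
      have h1 : DepOn {ω : Edg n → Bool | ω (c b) = true} {e : Edg n | e = c b} := by
        intro ω ω' hh
        simp only [Set.mem_setOf_eq]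
        rw [hh (c b) rfl]
      have h2 : DepOn (Ydown (cv b)) {e : Edg n | e = c b}ᶜ := by
        refine (depOn_Ydown (cv b)).mono ?_
        rintro u ⟨hpre, hlen⟩
        simp only [Set.mem_compl_iff, Set.mem_setOf_eq]
        intro h
        rw [h] at hlen
        rw [hclen b] at hlen
        simp [hc] at hlen
      have hmul := pi_inter_eq_mul (fun _ : Edg n => bern p) h1 h2
      rw [hZ]
      simp only
      rw [treeMeasure_eq_pi, hmul, ENNReal.toReal_mul, ← treeMeasure_eq_pi,
        prob_edge hp0 hp1, ih (cv b) (by rw [hclen b]; omega), ENNReal.toReal_ofReal hp0]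
    have hZc : ∀ b, (treeMeasure n p ((Z b)ᶜ)).toReal = 1 - p * rho p m := by
      intro b
      rw [toReal_compl_prob _ (measurableSet_all' _), hZprob b]
    have hdepZ : ∀ b, DepOn (Z b) {e : Edg n | (cv b).1 <+: e.1} := by
      intro b
      refine DepOn.inter (s := {e : Edg n | (cv b).1 <+: e.1}) ?_ ?_
      · intro ω ω' hh
        simp only [Set.mem_setOf_eq]
        rw [hh (c b) (by exact List.prefix_refl _)]
      · exact (depOn_Ydown (cv b)).mono (fun u hu => hu.1)
    have hcompl : (treeMeasure n p ((Ydown v)ᶜ)).toReal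
        = (1 - p * rho p m) * (1 - p * rho p m) := by
      rw [hdec, Set.compl_union]
      have hA := (hdepZ false).compl
      have hB : DepOn ((Z true)ᶜ) {e : Edg n | (cv false).1 <+: e.1}ᶜ := by
        refine ((hdepZ true).mono ?_).compl
        intro u hu
        simp only [Set.mem_setOf_eq] at hu
        simp only [Set.mem_compl_iff, Set.mem_setOf_eq]
        intro hcon
        have heq : (cv false).1 = (cv true).1 :=
          (List.prefix_of_prefix_length_le hcon hu (by rw [hclen, hclen])).eq_of_length
            (by rw [hclen, hclen])
        simp [hcv] at heq
      have hmul := pi_inter_eq_mul (fun _ : Edg n => bern p) hA hB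
      rw [treeMeasure_eq_pi, hmul, ENNReal.toReal_mul, ← treeMeasure_eq_pi, hZc, hZc]
    have h2 := toReal_compl_prob (treeMeasure n p) (measurableSet_all' (Ydown v))
    rw [h2] at hcompl
    have : (treeMeasure n p (Ydown v)).toReal = 1 - (1 - p * rho p m) * (1 - p * rho p m) := by
      linarith
    rw [this]
    show _ = 2 * p * rho p m - (p * rho p m) ^ 2
    ring

lemma prob_biInter {n : ℕ} {p : ℝ} (hp0 : 0 ≤ p) (hp1 : p ≤ 1) {k : ℕ} (hkn : k ≤ n) :
    ∀ S : Finset (Vtx n), (∀ v ∈ S, v.1.length = n - k) →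
      (treeMeasure n p (⋂ v ∈ S, (Ydown v)ᶜ)).toReal = (1 - rho p k) ^ S.card := by
  haveI := isProbabilityMeasure_bern hp0 hp1
  haveI := isProbabilityMeasure_tree (n := n) hp0 hp1
  intro S
  induction S using Finset.induction_on with
  | empty => intro _; simp
  | @insert v₀ S hv₀ ih =>
    intro hS
    rw [Finset.set_biInter_insert]
    have hv₀len : v₀.1.length = n - k := hS v₀ (Finset.mem_insert_self _ _)
    have hA : DepOn ((Ydown v₀)ᶜ) {e : Edg n | v₀.1 <+: e.1 ∧ v₀.1.length < e.1.length} :=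
      (depOn_Ydown v₀).compl
    have hB : DepOn (⋂ v ∈ S, (Ydown v)ᶜ)
        {e : Edg n | v₀.1 <+: e.1 ∧ v₀.1.length < e.1.length}ᶜ := by
      refine (DepOn.biInter S (fun v hv => (depOn_Ydown v).compl)).mono ?_
      intro u hu
      simp only [Set.mem_iUnion] at hu
      obtain ⟨v, hv, hvu, hlenvu⟩ := hu
      simp only [Set.mem_compl_iff, Set.mem_setOf_eq, not_and]
      intro hpre hlen0
      have heq : v.1 = v₀.1 :=
        (List.prefix_of_prefix_length_le hvu hpre
          (by rw [hS v (Finset.mem_insert_of_mem hv), hv₀len])).eq_of_length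
          (by rw [hS v (Finset.mem_insert_of_mem hv), hv₀len])
      exact hv₀ (Subtype.ext heq ▸ hv)
    have hmul := pi_inter_eq_mul (fun _ : Edg n => bern p) hA hB
    rw [treeMeasure_eq_pi, hmul, ENNReal.toReal_mul, ← treeMeasure_eq_pi,
      toReal_compl_prob _ (measurableSet_all' _),
      prob_Ydown hp0 hp1 k v₀ (by omega),
      ih (fun v hv => hS v (Finset.mem_insert_of_mem hv)),
      Finset.card_insert_of_notMem hv₀, pow_succ]
    ring

lemma maxLevel_lt_iff {n k : ℕ} (hk1 : 1 ≤ k) (hkn : k ≤ n) (ω : Edg n → Bool) :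
    maxLevel n ω < k ↔ ∀ v : Vtx n, v.1.length = n - k → ω ∉ Ydown v := by
  unfold maxLevel
  have hbdd : BddAbove ({0} ∪ {j | ∃ v : Vtx n, ω ∈ Ydown v ∧ n - v.1.length = j}) := by
    refine ⟨n, ?_⟩
    rintro x (hx | ⟨v, hv, rfl⟩)
    · simp only [Set.mem_singleton_iff] at hx
      omega
    · exact Nat.sub_le _ _
  have hne : ({0} ∪ {j | ∃ v : Vtx n, ω ∈ Ydown v ∧ n - v.1.length = j}).Nonempty :=
    ⟨0, Or.inl rfl⟩
  have hfin : ({0} ∪ {j | ∃ v : Vtx n, ω ∈ Ydown v ∧ n - (v.1 : List Bool).length = j}).Finite := by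
    refine Set.Finite.subset (Set.finite_Iic n) ?_
    rintro x (hx | ⟨v, hv, rfl⟩)
    · simp only [Set.mem_singleton_iff] at hx
      simp [hx]
    · simp [Set.mem_Iic]
  rw [hfin.csSup_lt_iff hne]
  constructor
  · intro h v hvlen hY
    have hk : n - v.1.length < k := h _ (Or.inr ⟨v, hY, rfl⟩)
    omega
  · rintro h x (hx | ⟨v, hv, rfl⟩)
    · simp only [Set.mem_singleton_iff] at hx
      omega
    · by_contra hcon
      push_neg at hcon
      obtain ⟨w, hw, hvw, hcond⟩ := hv
      have hvlen : v.1.length ≤ n - k := by omega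
      refine h ⟨w.take (n - k), by simp⟩ (by simp [List.length_take]; omega)
        ⟨w, hw, List.take_prefix _ _, fun u hu hl => ?_⟩
      apply hcond u hu
      simp only [List.length_take] at hl
      omega

lemma card_level {n k : ℕ} (hkn : k ≤ n) :
    (Finset.univ.filter (fun v : Vtx n => v.1.length = n - k)).card = 2 ^ (n - k) := by
  have e : {v : Vtx n // v.1.length = n - k} ≃ List.Vector Bool (n - k) :=
    { toFun := fun v => ⟨v.1.1, v.2⟩
      invFun := fun l => ⟨⟨l.1, by rw [l.2]; omega⟩, l.2⟩
      left_inv := fun v => rfl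
      right_inv := fun l => rfl }
  rw [← Fintype.card_subtype, Fintype.card_congr e, card_vector, Fintype.card_bool]


/-- **Probability that water does not reach level `k`.**
For `1 ≤ k ≤ n`, `P(ℓ_max < k) = (1 - ρ_k)^{2^{n-k}}`. -/
theorem prob_maxLevel_lt (n : ℕ) (p : ℝ) (hp0 : 0 ≤ p) (hp1 : p ≤ 1)
    (k : ℕ) (hk1 : 1 ≤ k) (hkn : k ≤ n) :
    (treeMeasure n p {ω | maxLevel n ω < k}).toReal =
      (1 - rho p k) ^ (2 ^ (n - k)) := by
  haveI := isProbabilityMeasure_bern hp0 hp1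
  haveI := isProbabilityMeasure_tree (n := n) hp0 hp1
  have hset : {ω | maxLevel n ω < k} =
      ⋂ v ∈ Finset.univ.filter (fun v : Vtx n => v.1.length = n - k), (Ydown v)ᶜ := by
    ext ω
    simp only [Set.mem_setOf_eq, Set.mem_iInter, Finset.mem_filter, Finset.mem_univ, true_and,
      Set.mem_compl_iff]
    rw [maxLevel_lt_iff hk1 hkn]
  rw [hset]
  rw [prob_biInter hp0 hp1 hkn _ (fun v hv => (Finset.mem_filter.1 hv).2)]
  rw [card_level hkn]
end

section
/- Let (p_n) be a sequence in (0,1) with p_n → 0, and consider the randomly oriented complete binary tree T_n of height n with parameter p_n. Then there exists N such that for all n ≥ N and all non-leaf vertices u, v ∈ V_n with neither u a prefix of v nor v a prefix of u, P(X_u ∩ X_v) ≤ P(X_u)·P(X_v) + d(u,v)·ρ^{(n)}_{ℓ(u∨v)}, where d(u,v) is the graph distance between u and v in T_n, u∨v is the longest common prefix of u and v, and ρ^{(n)}_k is defined by ρ_0 = 1, ρ_{k+1} = 2p_n·ρ_k − (p_n·ρ_k)². In particular Cov(1_{X_u}, 1_{X_v}) ≤ d(u,v)·ρ^{(n)}_{ℓ(u∨v)}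 for such u, v and n ≥ N. -/
open MeasureTheory ProbabilityTheory Finset
open scoped Classical

/-- The longest common prefix of two words. -/
def lcp : List Bool → List Bool → List Bool
  | a :: as, b :: bs => if a = b then a :: lcp as bs else []
  | _, _ => []


/-! A directed path in the tree climbs from a leaf to an apex `a` and then descends, so `X_v`
is the union over the prefixes `a` of `v` of the events "some leaf percolates down to `a`" and
"the path from `a` to `v` points away from the root".  Let `m = u ∨ v`.  Apexes strictly below
`m` lie in the subtrees of the two distinct children of `m` towards `u` and `v`, so these parts of
`X_u` and `X_v` depend on disjoint sets of edges and are independent.  An apex `a` between the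
root and `m` forces the edge from `a` to its child off the path to `v` to point up and that child
to be wet from the leaves, which has probability `p ρ_{ℓ(a)-1}`; once `p ≤ 1/5` these terms sum
to at most `ρ_{ℓ(m)}`.  The error is thus `2 ρ_{ℓ(m)} ≤ d(u,v) ρ_{ℓ(m)}`. -/

section Independence

variable {ι : Type*} {α : ι → Type*}

theorem dependsOn_mem_of_imp {A : Set (∀ i, α i)} {s : Set ι}
    (h : ∀ x y, (∀ i ∈ s, x i = y i) → x ∈ A → y ∈ A) : DependsOn (· ∈ A) s :=
  fun x y hxy => propext ⟨h x y hxy, h y x fun i hi => (hxy i hi).symm⟩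

theorem DependsOn.eq_preimage_image_restrict {A : Set (∀ i, α i)} {s : Finset ι}
    (hA : DependsOn (· ∈ A) s) :
    A = (fun x (i : s) => x i) ⁻¹' ((fun x (i : s) => x i) '' A) := by
  refine (Set.subset_preimage_image _ _).antisymm ?_
  rintro y ⟨x, hx, hxy⟩
  have : (x ∈ A) = (y ∈ A) := hA fun i hi => congrFun hxy ⟨i, hi⟩
  exact this ▸ hx

theorem dependsOn_mem_setOf_apply_eq {s : Set ι} {i : ι} (hi : i ∈ s) (c : α i) :
    DependsOn (· ∈ {x : ∀ i, α i | x i = c}) s :=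
  dependsOn_mem_of_imp fun _ _ hxy hx => (hxy i hi).symm.trans hx

theorem DependsOn.mem_inter {A B : Set (∀ i, α i)} {s : Set ι} (hA : DependsOn (· ∈ A) s)
    (hB : DependsOn (· ∈ B) s) : DependsOn (· ∈ A ∩ B) s :=
  fun _ _ hxy => congrArg₂ And (hA hxy) (hB hxy)

theorem measure_pi_inter_eq_mul_of_dependsOn [Fintype ι] [∀ i, MeasurableSpace (α i)]
    [∀ i, Countable (α i)] [∀ i, MeasurableSingletonClass (α i)]
    (μ : ∀ i, Measure (α i)) [∀ i, IsProbabilityMeasure (μ i)] {s : Set ι}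
    {A B : Set (∀ i, α i)} (hA : DependsOn (· ∈ A) s) (hB : DependsOn (· ∈ B) sᶜ) :
    Measure.pi μ (A ∩ B) = Measure.pi μ A * Measure.pi μ B := by
  have hind := (iIndepFun_pi (μ := μ) (X := fun _ => id) fun _ => aemeasurable_id).indepFun_finset
    s.toFinset sᶜ.toFinset (by simp [Finset.disjoint_left]) fun i => measurable_pi_apply i
  rw [← Set.coe_toFinset s] at hA
  rw [← Set.coe_toFinset sᶜ] at hB
  rw [hA.eq_preimage_image_restrict, hB.eq_preimage_image_restrict]
  exact hind.measure_inter_preimage_eq_mul _ _ (Set.to_countable _).measurableSet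
    (Set.to_countable _).measurableSet

end Independence

section Rho

variable {p : ℝ}

theorem rho_mem_Icc (h0 : 0 ≤ p) (h1 : p ≤ 1) : ∀ k, rho p k ∈ Set.Icc (0 : ℝ) 1
  | 0 => by simp [rho]
  | k + 1 => by
    obtain ⟨hk0, hk1⟩ := rho_mem_Icc h0 h1 k
    have hx0 : 0 ≤ p * rho p k := mul_nonneg h0 hk0
    have hx1 : p * rho p k ≤ 1 := mul_le_one₀ h1 hk0 hk1
    simp only [rho, Set.mem_Icc]
    constructor <;> nlinarith

theorem mul_rho_le_rho_succ (h0 : 0 ≤ p) (h1 : p ≤ 1) (k : ℕ) :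
    p * rho p k ≤ rho p (k + 1) := by
  obtain ⟨hk0, hk1⟩ := rho_mem_Icc h0 h1 k
  have hx0 : 0 ≤ p * rho p k := mul_nonneg h0 hk0
  have hx1 : p * rho p k ≤ 1 := mul_le_one₀ h1 hk0 hk1
  simp only [rho]
  nlinarith

theorem rho_add_two_add_mul_rho_le (h0 : 0 ≤ p) (h5 : p ≤ 1 / 5) (k : ℕ) :
    rho p (k + 2) + p * rho p k ≤ rho p (k + 1) := by
  obtain ⟨hk0, hk1⟩ := rho_mem_Icc h0 (by linarith) k
  have hk1' := (rho_mem_Icc h0 (by linarith) (k + 1)).1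
  have hx0 : 0 ≤ p * rho p k := mul_nonneg h0 hk0
  have hx5 : p * rho p k ≤ 1 / 5 := by nlinarith
  have e1 : rho p (k + 1) = 2 * p * rho p k - (p * rho p k) ^ 2 := rfl
  have e2 : rho p (k + 2) = 2 * p * rho p (k + 1) - (p * rho p (k + 1)) ^ 2 := rfl
  nlinarith [mul_nonneg hx0 (by linarith : (0 : ℝ) ≤ 1 / 5 - p * rho p k),
    mul_nonneg (by linarith : (0 : ℝ) ≤ 1 / 5 - p) hk1', sq_nonneg (p * rho p (k + 1))]

theorem sum_mul_rho_le (h0 : 0 ≤ p) (h5 : p ≤ 1 / 5) :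
    ∀ M k : ℕ, ∑ j ∈ range (M + 1), p * rho p (k + j) ≤ rho p (k + 1)
  | 0, k => by simpa using mul_rho_le_rho_succ h0 (by linarith) k
  | M + 1, k => by
    have ih := sum_mul_rho_le h0 h5 M (k + 1)
    have hstep := rho_add_two_add_mul_rho_le h0 h5 k
    rw [sum_range_succ']
    simp only [add_zero, ← add_assoc, add_right_comm k _ 1] at ih ⊢
    linarith

end Rho

section Words

theorem length_lt_of_prefix_of_not_prefix {α : Type*} {m a b : List α} (ha : m <+: a)
    (hb : m <+: b) (hab : ¬ a <+: b) : m.length < a.length :=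
  ha.length_le.lt_of_ne fun hl => hab (ha.eq_of_length hl ▸ hb)

theorem concat_getElem_length_prefix {α : Type*} {a w : List α} (h : a <+: w)
    (hlt : a.length < w.length) : a ++ [w[a.length]] <+: w := by
  have := List.take_concat_get' w a.length hlt
  rw [← List.prefix_iff_eq_take.mp h] at this
  exact this ▸ List.take_prefix _ _

theorem lcp_prefix_left : ∀ a b : List Bool, lcp a b <+: a
  | [], _ => by simp [lcp]
  | _ :: _, [] => by simp [lcp]
  | a :: as, b :: bs => by
    by_cases h : a = b
    · simpa [lcp, h] using lcp_prefix_left as bs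
    · simp [lcp, h]

theorem lcp_prefix_right : ∀ a b : List Bool, lcp a b <+: b
  | [], _ => by simp [lcp]
  | _ :: _, [] => by simp [lcp]
  | a :: as, b :: bs => by
    by_cases h : a = b
    · simpa [lcp, h] using lcp_prefix_right as bs
    · simp [lcp, h]

theorem prefix_lcp : ∀ {c a b : List Bool}, c <+: a → c <+: b → c <+: lcp a b
  | [], _, _, _, _ => List.nil_prefix
  | _ :: _, [], _, ha, _ => absurd ha (by simp)
  | _ :: _, _ :: _, [], _, hb => absurd hb (by simp)
  | x :: cs, y :: as, z :: bs, ha, hb => by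
    obtain ⟨rfl, ha'⟩ := List.cons_prefix_cons.mp ha
    obtain ⟨rfl, hb'⟩ := List.cons_prefix_cons.mp hb
    simpa [lcp] using prefix_lcp ha' hb'

theorem take_length_lcp_succ_ne {a b : List Bool} (hab : ¬ a <+: b) :
    a.take ((lcp a b).length + 1) ≠ b.take ((lcp a b).length + 1) := by
  intro h
  have hle := (prefix_lcp (List.take_prefix _ a) (h ▸ List.take_prefix _ b)).length_le
  have hlt := length_lt_of_prefix_of_not_prefix (lcp_prefix_left a b) (lcp_prefix_right a b) hab
  simp only [List.length_take] at hle
  omega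

theorem two_le_length_add_length_sub_lcp {a b : List Bool} (hab : ¬ a <+: b) (hba : ¬ b <+: a) :
    2 ≤ a.length + b.length - 2 * (lcp a b).length := by
  have := length_lt_of_prefix_of_not_prefix (lcp_prefix_left a b) (lcp_prefix_right a b) hab
  have := length_lt_of_prefix_of_not_prefix (lcp_prefix_right a b) (lcp_prefix_left a b) hba
  omega

end Words

section Paths

variable {n : ℕ}

def orientedPath (n : ℕ) (β : Bool) (a w : List Bool) : Set (Edg n → Bool) :=
  {ω | ∀ e : Edg n, e.1 <+: w → a.length < e.1.length → ω e = β}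

variable {ω : Edg n → Bool} {β : Bool}

theorem orientedPath_subset_of_prefix {a w w' : List Bool} (hw : w' <+: w) :
    orientedPath n β a w ⊆ orientedPath n β a w' :=
  fun _ h e he => h e (he.trans hw)

theorem orientedPath_subset_of_length_le {a a' w : List Bool} (ha : a.length ≤ a'.length) :
    orientedPath n β a w ⊆ orientedPath n β a' w :=
  fun _ h e he hlt => h e he (ha.trans_lt hlt)

theorem self_mem_orientedPath (a : List Bool) : ω ∈ orientedPath n β a a :=
  fun _ he hlt => absurd he.length_le hlt.not_ge

theorem mem_orientedPath_concat {a w : List Bool} {x : Bool} {e : Edg n}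
    (he : e.1 = w ++ [x]) (hωe : ω e = β) (h : ω ∈ orientedPath n β a w) :
    ω ∈ orientedPath n β a (w ++ [x]) := by
  intro e' he' hlt
  rcases List.prefix_concat_iff.mp he' with h' | h'
  · rwa [Subtype.ext (h'.trans he.symm)]
  · exact h e' h' hlt

theorem mem_orientedPath_of_concat {a w : List Bool} {x : Bool} {e : Edg n}
    (he : e.1 = a ++ [x]) (hωe : ω e = β) (hw : a ++ [x] <+: w)
    (h : ω ∈ orientedPath n β (a ++ [x]) w) : ω ∈ orientedPath n β a w := by
  intro e' he' hlt
  by_cases hl : e'.1.length ≤ (a ++ [x]).length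
  · have : e'.1 = a ++ [x] :=
      (List.prefix_of_prefix_length_le he' hw hl).eq_of_length (by simp at hl ⊢; omega)
    rwa [Subtype.ext (this.trans he.symm)]
  · exact h e' he' (by omega)

theorem tStep_concat_up {w : List Bool} {x : Bool}
    (hw : (w ++ [x]).length ≤ n) (hω : ω ⟨w ++ [x], by simp, hw⟩ = true) :
    TStep ω ⟨w ++ [x], hw⟩ ⟨w, by simp at hw; omega⟩ :=
  ⟨_, Or.inl ⟨hω, rfl, List.dropLast_concat.symm⟩⟩

theorem tStep_concat_down {v : List Bool} {x : Bool}
    (hv : (v ++ [x]).length ≤ n) (hω : ω ⟨v ++ [x], by simp, hv⟩ = false) :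
    TStep ω ⟨v, by simp at hv; omega⟩ ⟨v ++ [x], hv⟩ :=
  ⟨_, Or.inr ⟨hω, rfl, List.dropLast_concat.symm⟩⟩

theorem reflTransGen_tStep_of_mem_orientedPath_true {a w : List Bool}
    (hw : w.length ≤ n) (ha : a <+: w) (hω : ω ∈ orientedPath n true a w) :
    Relation.ReflTransGen (TStep ω) ⟨w, hw⟩ ⟨a, ha.length_le.trans hw⟩ := by
  induction w using List.reverseRecOn with
  | nil => obtain rfl := List.prefix_nil.mp ha; rfl
  | append_singleton w x ih =>
    rcases List.prefix_concat_iff.mp ha with rfl | ha'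
    · rfl
    · have hlt : a.length < (w ++ [x]).length := by simpa using ha'.length_le
      exact .head (tStep_concat_up hw (hω _ (List.prefix_refl _) hlt))
        (ih _ ha' (orientedPath_subset_of_prefix (List.prefix_append w [x]) hω))

theorem reflTransGen_tStep_of_mem_orientedPath_false {a v : List Bool}
    (hv : v.length ≤ n) (ha : a <+: v) (hω : ω ∈ orientedPath n false a v) :
    Relation.ReflTransGen (TStep ω) ⟨a, ha.length_le.trans hv⟩ ⟨v, hv⟩ := by
  induction v using List.reverseRecOn with
  | nil => obtain rfl := List.prefix_nil.mp ha; rfl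
  | append_singleton v x ih =>
    rcases List.prefix_concat_iff.mp ha with rfl | ha'
    · rfl
    · have hlt : a.length < (v ++ [x]).length := by simpa using ha'.length_le
      exact .tail (ih _ ha' (orientedPath_subset_of_prefix (List.prefix_append v [x]) hω))
        (tStep_concat_down hv (hω _ (List.prefix_refl _) hlt))

/-- `a` is an apex of a directed path from `w` to `v`: the path climbs from `w` to `a`
and descends from `a` to `v`. -/
def IsApex (ω : Edg n → Bool) (a w v : List Bool) : Prop :=
  a <+: w ∧ a <+: v ∧ ω ∈ orientedPath n true a w ∧ ω ∈ orientedPath n false a v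

theorem exists_isApex_of_tStep {b c : Vtx n} {v : List Bool}
    (hbc : TStep ω b c) (hc : ∃ a, IsApex ω a c.1 v) : ∃ a, IsApex ω a b.1 v := by
  obtain ⟨a, hac, hav, hup, hdown⟩ := hc
  obtain ⟨e, ⟨hωe, heb, hce⟩ | ⟨hωe, hec, hbe⟩⟩ := hbc
  · have hb : b.1 = c.1 ++ [e.1.getLast e.2.1] := by
      rw [hce, List.dropLast_append_getLast, heb]
    refine ⟨a, hac.trans (hb ▸ List.prefix_append _ _), hav, ?_, hdown⟩
    rw [hb]
    exact mem_orientedPath_concat (heb.trans hb) hωe hup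
  · have hc : c.1 = b.1 ++ [e.1.getLast e.2.1] := by
      rw [hbe, List.dropLast_append_getLast, hec]
    rw [hc] at hac hup
    rcases List.prefix_concat_iff.mp hac with rfl | hab
    · exact ⟨b.1, List.prefix_refl _, (List.prefix_append _ _).trans hav,
        self_mem_orientedPath _, mem_orientedPath_of_concat (hec.trans hc) hωe hav hdown⟩
    · exact ⟨a, hab, hav, orientedPath_subset_of_prefix (List.prefix_append _ _) hup, hdown⟩

theorem reflTransGen_tStep_iff {w v : Vtx n} :
    Relation.ReflTransGen (TStep ω) w v ↔ ∃ a, IsApex ω a w.1 v.1 := by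
  constructor
  · intro h
    induction h using Relation.ReflTransGen.head_induction_on with
    | refl => exact ⟨v.1, List.prefix_refl _, List.prefix_refl _,
        self_mem_orientedPath _, self_mem_orientedPath _⟩
    | head hstep _ ih => exact exists_isApex_of_tStep hstep ih
  · rintro ⟨a, haw, hav, hup, hdown⟩
    exact (reflTransGen_tStep_of_mem_orientedPath_true w.2 haw hup).trans
      (reflTransGen_tStep_of_mem_orientedPath_false v.2 hav hdown)

end Paths

section Events

variable {n : ℕ}

/-- `Ydown` for words. -/
def downWet (n : ℕ) (a : List Bool) : Set (Edg n → Bool) :=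
  {ω | ∃ w : List Bool, w.length = n ∧ a <+: w ∧ ω ∈ orientedPath n true a w}

def wetVia (n : ℕ) (a v : List Bool) : Set (Edg n → Bool) :=
  downWet n a ∩ orientedPath n false a v

def wetBelow (n : ℕ) (c v : List Bool) : Set (Edg n → Bool) :=
  {ω | ∃ a, c <+: a ∧ a <+: v ∧ ω ∈ wetVia n a v}

def childEdge {a : List Bool} (ha : a.length < n) (b : Bool) : Edg n :=
  ⟨a ++ [b], by simp, by simp; omega⟩

theorem mem_Xwet_iff {ω : Edg n → Bool} {v : Vtx n} :
    ω ∈ Xwet v ↔ ∃ a, a <+: v.1 ∧ ω ∈ wetVia n a v.1 := by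
  simp only [Xwet, Set.mem_ofPred_eq, reflTransGen_tStep_iff]
  constructor
  · rintro ⟨w, hw, a, haw, hav, hup, hdown⟩
    exact ⟨a, hav, ⟨w.1, hw, haw, hup⟩, hdown⟩
  · rintro ⟨a, hav, ⟨w, hw, haw, hup⟩, hdown⟩
    exact ⟨⟨w, hw.le⟩, hw, a, haw, hav, hup, hdown⟩

theorem wetBelow_subset_Xwet (c : List Bool) (v : Vtx n) : wetBelow n c v.1 ⊆ Xwet v :=
  fun _ ⟨a, _, hav, h⟩ => mem_Xwet_iff.mpr ⟨a, hav, h⟩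

theorem Xwet_subset_wetBelow_union {m : List Bool} {v : Vtx n} (hm : m <+: v.1) :
    Xwet v ⊆ wetBelow n (v.1.take (m.length + 1)) v.1 ∪
      ⋃ i ∈ range (m.length + 1), wetVia n (m.take i) v.1 := by
  intro ω hω
  obtain ⟨a, hav, h⟩ := mem_Xwet_iff.mp hω
  by_cases hma : m.length < a.length
  · exact Or.inl ⟨a, List.prefix_of_prefix_length_le (List.take_prefix _ _) hav (by simp; omega),
      hav, h⟩
  · have ham : a <+: m := List.prefix_of_prefix_length_le hav hm (by omega)
    refine Or.inr (Set.mem_biUnion (x := a.length) ?_ ?_)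
    · simpa using Nat.lt_succ_of_le ham.length_le
    · rwa [← List.prefix_iff_eq_take.mp ham]

theorem downWet_eq_union {a : List Bool} (ha : a.length < n) :
    downWet n a = ({ω | ω (childEdge ha false) = true} ∩ downWet n (a ++ [false])) ∪
      ({ω | ω (childEdge ha true) = true} ∩ downWet n (a ++ [true])) := by
  ext ω
  constructor
  · rintro ⟨w, hw, haw, hup⟩
    have hxw := concat_getElem_length_prefix haw (by omega)
    have hx : ω ∈ {ω | ω (childEdge ha w[a.length]) = true} ∩
        downWet n (a ++ [w[a.length]]) :=
      ⟨hup _ hxw (by simp [childEdge]), w, hw, hxw,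
        orientedPath_subset_of_length_le (by simp) hup⟩
    generalize w[a.length] = x at hx
    cases x
    · exact Or.inl hx
    · exact Or.inr hx
  · rintro (⟨hωe, w, hw, hxw, hup⟩ | ⟨hωe, w, hw, hxw, hup⟩) <;>
      exact ⟨w, hw, (List.prefix_append _ _).trans hxw,
        mem_orientedPath_of_concat rfl hωe hxw hup⟩

end Events

section Probability

variable {n : ℕ} {p : ℝ}

theorem dependsOn_mem_downWet (a : List Bool) :
    DependsOn (· ∈ downWet n a) {e : Edg n | a <+: e.1 ∧ a.length < e.1.length} :=
  dependsOn_mem_of_imp fun _ _ hxy ⟨w, hw, haw, hup⟩ => ⟨w, hw, haw, fun e he hlt =>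
    (hxy e ⟨List.prefix_of_prefix_length_le haw he hlt.le, hlt⟩).symm.trans (hup e he hlt)⟩

theorem dependsOn_mem_wetVia {a v : List Bool} (hav : a <+: v) :
    DependsOn (· ∈ wetVia n a v) {e : Edg n | a <+: e.1 ∧ a.length < e.1.length} :=
  (dependsOn_mem_downWet a).mem_inter <| dependsOn_mem_of_imp fun _ _ hxy hdown e he hlt =>
    (hxy e ⟨List.prefix_of_prefix_length_le hav he hlt.le, hlt⟩).symm.trans (hdown e he hlt)

theorem dependsOn_mem_wetBelow (c v : List Bool) :
    DependsOn (· ∈ wetBelow n c v) {e : Edg n | c <+: e.1} :=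
  dependsOn_mem_of_imp fun _ _ hxy ⟨a, hca, hav, h⟩ => ⟨a, hca, hav,
    ((dependsOn_mem_wetVia hav).mono (fun _ he => hca.trans he.1) hxy).mp h⟩

theorem isProbabilityMeasure_bern_s14 (h0 : 0 ≤ p) (h1 : p ≤ 1) : IsProbabilityMeasure (bern p) :=
  ⟨by simp [bern, ← ENNReal.ofReal_add h0 (sub_nonneg.mpr h1)]⟩

theorem isProbabilityMeasure_treeMeasure (h0 : 0 ≤ p) (h1 : p ≤ 1) :
    IsProbabilityMeasure (treeMeasure n p) :=
  have := isProbabilityMeasure_bern_s14 h0 h1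
  inferInstanceAs (IsProbabilityMeasure (Measure.pi _))

theorem treeMeasure_real_inter_of_dependsOn (h0 : 0 ≤ p) (h1 : p ≤ 1) {s : Set (Edg n)}
    {A B : Set (Edg n → Bool)} (hA : DependsOn (· ∈ A) s) (hB : DependsOn (· ∈ B) sᶜ) :
    (treeMeasure n p).real (A ∩ B) = (treeMeasure n p).real A * (treeMeasure n p).real B := by
  have := isProbabilityMeasure_bern_s14 h0 h1
  simp only [measureReal_def, treeMeasure, measure_pi_inter_eq_mul_of_dependsOn _ hA hB,
    ENNReal.toReal_mul]

theorem treeMeasure_real_coord_true (h0 : 0 ≤ p) (h1 : p ≤ 1) (e : Edg n) :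
    (treeMeasure n p).real {ω | ω e = true} = p := by
  have := isProbabilityMeasure_bern_s14 h0 h1
  have hpre := (measurePreserving_eval (fun _ : Edg n => bern p) e).measure_preimage
    (s := ({true} : Set Bool)) (measurableSet_singleton _).nullMeasurableSet
  rw [measureReal_def, treeMeasure, show {ω : Edg n → Bool | ω e = true} =
    Function.eval e ⁻¹' ({true} : Set Bool) from rfl, hpre]
  simp [bern, ENNReal.toReal_ofReal h0]

theorem treeMeasure_real_childEdge_inter_downWet (h0 : 0 ≤ p) (h1 : p ≤ 1) {a : List Bool}
    (ha : a.length < n) (b : Bool) :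
    (treeMeasure n p).real ({ω | ω (childEdge ha b) = true} ∩ downWet n (a ++ [b])) =
      p * (treeMeasure n p).real (downWet n (a ++ [b])) := by
  rw [treeMeasure_real_inter_of_dependsOn h0 h1 (dependsOn_mem_setOf_apply_eq rfl _)
    ((dependsOn_mem_downWet _).mono ?_), treeMeasure_real_coord_true h0 h1]
  rintro e ⟨-, hlt⟩ rfl
  simp [childEdge] at hlt

theorem treeMeasure_real_downWet (h0 : 0 ≤ p) (h1 : p ≤ 1) {a : List Bool}
    (ha : a.length ≤ n) :
    (treeMeasure n p).real (downWet n a) = rho p (n - a.length) := by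
  have := isProbabilityMeasure_treeMeasure (n := n) h0 h1
  induction hk : n - a.length generalizing a with
  | zero =>
    have : downWet n a = Set.univ := Set.eq_univ_of_forall fun ω =>
      ⟨a, by omega, List.prefix_refl _, self_mem_orientedPath _⟩
    rw [this, probReal_univ, rho]
  | succ k ih =>
    have hlt : a.length < n := by omega
    set S : Bool → Set (Edg n → Bool) :=
      fun b => {ω | ω (childEdge hlt b) = true} ∩ downWet n (a ++ [b])
    have hchild (b : Bool) : (treeMeasure n p).real (S b) = p * rho p k := by
      rw [treeMeasure_real_childEdge_inter_downWet h0 h1, ih (by simp; omega) (by simp; omega)]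
    have hdisj : ∀ e : Edg n, a ++ [true] <+: e.1 → ¬ a ++ [false] <+: e.1 := fun e ht hf => by
      simpa using (List.prefix_of_prefix_length_le hf ht (by simp)).eq_of_length (by simp)
    have hfalse : DependsOn (· ∈ S false) {e : Edg n | a ++ [false] <+: e.1} :=
      DependsOn.mem_inter
        (dependsOn_mem_setOf_apply_eq (i := childEdge hlt false) (List.prefix_refl _) _)
        ((dependsOn_mem_downWet _).mono fun _ he => he.1)
    have htrue : DependsOn (· ∈ S true) {e : Edg n | a ++ [false] <+: e.1}ᶜ :=
      DependsOn.mem_inter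
        (dependsOn_mem_setOf_apply_eq (i := childEdge hlt true) (hdisj _ (List.prefix_refl _)) _)
        ((dependsOn_mem_downWet _).mono fun e he => hdisj e he.1)
    have hindep := treeMeasure_real_inter_of_dependsOn h0 h1 hfalse htrue
    have hincl := measureReal_union_add_inter (μ := treeMeasure n p) (s := S false) (t := S true)
      (Set.to_countable _).measurableSet
    rw [hindep, hchild, hchild] at hincl
    rw [downWet_eq_union hlt, rho]
    linarith

theorem treeMeasure_real_wetBelow_inter (h0 : 0 ≤ p) (h1 : p ≤ 1) {c c' u v : List Bool}
    (hcc' : ¬ c <+: c') (hc'c : ¬ c' <+: c) :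
    (treeMeasure n p).real (wetBelow n c u ∩ wetBelow n c' v) =
      (treeMeasure n p).real (wetBelow n c u) * (treeMeasure n p).real (wetBelow n c' v) := by
  refine treeMeasure_real_inter_of_dependsOn h0 h1 (dependsOn_mem_wetBelow c u)
    ((dependsOn_mem_wetBelow c' v).mono fun e hc' hc => ?_)
  rcases le_total c.length c'.length with h | h
  · exact hcc' (List.prefix_of_prefix_length_le hc hc' h)
  · exact hc'c (List.prefix_of_prefix_length_le hc' hc h)

/-- The leaf feeding the apex `a` lies below the child of `a` off the path to `v`, since the edge
to the other child points away from the root. -/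
theorem treeMeasure_real_wetVia_le (h0 : 0 ≤ p) (h1 : p ≤ 1) {a v : List Bool} (hav : a <+: v)
    (hlt : a.length < v.length) (hv : v.length ≤ n) :
    (treeMeasure n p).real (wetVia n a v) ≤ p * rho p (n - a.length - 1) := by
  have := isProbabilityMeasure_treeMeasure (n := n) h0 h1
  have han : a.length < n := by omega
  have hsub : wetVia n a v ⊆
      {ω | ω (childEdge han (!v[a.length])) = true} ∩ downWet n (a ++ [!v[a.length]]) := by
    rintro ω ⟨⟨w, hw, haw, hup⟩, hdown⟩
    have hxw := concat_getElem_length_prefix haw (by omega)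
    have hx : w[a.length] = !v[a.length] := Bool.eq_not_of_ne fun hxv => by
      have hup' := hup (childEdge han _) hxw (by simp [childEdge])
      have hdown' := hdown (childEdge han _) (hxv ▸ concat_getElem_length_prefix hav hlt)
        (by simp [childEdge])
      exact Bool.false_ne_true (hdown'.symm.trans hup')
    rw [hx] at hxw
    exact ⟨hup _ hxw (by simp [childEdge]), w, hw, hxw,
      orientedPath_subset_of_length_le (by simp) hup⟩
  calc (treeMeasure n p).real (wetVia n a v)
      ≤ (treeMeasure n p).real
          ({ω | ω (childEdge han (!v[a.length])) = true} ∩ downWet n (a ++ [!v[a.length]])) :=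
        measureReal_mono hsub
    _ = p * rho p (n - a.length - 1) := by
      rw [treeMeasure_real_childEdge_inter_downWet h0 h1,
        treeMeasure_real_downWet h0 h1 (by simp; omega), List.length_append,
        List.length_singleton, Nat.sub_add_eq]

theorem treeMeasure_real_biUnion_wetVia_le (h0 : 0 ≤ p) (h5 : p ≤ 1 / 5) {m v : List Bool}
    (hmv : m <+: v) (hlt : m.length < v.length) (hv : v.length ≤ n) :
    (treeMeasure n p).real (⋃ i ∈ range (m.length + 1), wetVia n (m.take i) v) ≤
      rho p (n - m.length) := by
  calc _ ≤ ∑ i ∈ range (m.length + 1), (treeMeasure n p).real (wetVia n (m.take i) v) :=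
        measureReal_biUnion_finset_le _ _
    _ ≤ ∑ i ∈ range (m.length + 1),
          p * rho p (n - m.length - 1 + (m.length + 1 - 1 - i)) := by
      refine sum_le_sum fun i hi => ?_
      have hi' := mem_range.mp hi
      have hmi : (m.take i).length = i := by simp; omega
      have := treeMeasure_real_wetVia_le h0 (by linarith) ((List.take_prefix i m).trans hmv)
        (by omega) hv
      rwa [hmi, show n - i - 1 = n - m.length - 1 + (m.length + 1 - 1 - i) by omega] at this
    _ = ∑ j ∈ range (m.length + 1), p * rho p (n - m.length - 1 + j) :=
      sum_range_reflect (fun j => p * rho p (n - m.length - 1 + j)) _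
    _ ≤ rho p (n - m.length - 1 + 1) := sum_mul_rho_le h0 h5 _ _
    _ = rho p (n - m.length) := by congr 1; omega

theorem treeMeasure_real_Xwet_inter_le (h0 : 0 ≤ p) (h5 : p ≤ 1 / 5) {u v : Vtx n}
    (huv : ¬ u.1 <+: v.1) (hvu : ¬ v.1 <+: u.1) :
    (treeMeasure n p).real (Xwet u ∩ Xwet v) ≤
      (treeMeasure n p).real (Xwet u) * (treeMeasure n p).real (Xwet v) +
        2 * rho p (n - (lcp u.1 v.1).length) := by
  have h1 : p ≤ 1 := by linarith
  have := isProbabilityMeasure_treeMeasure (n := n) h0 h1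
  have hmu := lcp_prefix_left u.1 v.1
  have hmv := lcp_prefix_right u.1 v.1
  have hmu' := length_lt_of_prefix_of_not_prefix hmu hmv huv
  have hmv' := length_lt_of_prefix_of_not_prefix hmv hmu hvu
  have hne := take_length_lcp_succ_ne huv
  set m := lcp u.1 v.1
  have hlen : (u.1.take (m.length + 1)).length = (v.1.take (m.length + 1)).length := by
    simp only [List.length_take]; omega
  set Bu := ⋃ i ∈ range (m.length + 1), wetVia n (m.take i) u.1
  set Bv := ⋃ i ∈ range (m.length + 1), wetVia n (m.take i) v.1
  have hsplit : Xwet u ∩ Xwet v ⊆ (wetBelow n (u.1.take (m.length + 1)) u.1 ∩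
      wetBelow n (v.1.take (m.length + 1)) v.1) ∪ (Bu ∪ Bv) := by
    rintro ω ⟨hu, hv⟩
    rcases Xwet_subset_wetBelow_union hmu hu with hu | hu <;>
      rcases Xwet_subset_wetBelow_union hmv hv with hv | hv
    exacts [Or.inl ⟨hu, hv⟩, Or.inr (Or.inr hv), Or.inr (Or.inl hu), Or.inr (Or.inl hu)]
  calc _ ≤ _ := measureReal_mono hsplit
    _ ≤ _ := (measureReal_union_le _ _).trans (add_le_add_right (measureReal_union_le _ _) _)
    _ ≤ (treeMeasure n p).real (Xwet u) * (treeMeasure n p).real (Xwet v) +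
          (rho p (n - m.length) + rho p (n - m.length)) := by
      rw [treeMeasure_real_wetBelow_inter h0 h1 (fun h => hne (h.eq_of_length hlen))
        (fun h => hne (h.eq_of_length hlen.symm).symm)]
      exact add_le_add (mul_le_mul (measureReal_mono (wetBelow_subset_Xwet _ u))
        (measureReal_mono (wetBelow_subset_Xwet _ v)) measureReal_nonneg measureReal_nonneg)
        (add_le_add (treeMeasure_real_biUnion_wetVia_le h0 h5 hmu hmu' u.2)
          (treeMeasure_real_biUnion_wetVia_le h0 h5 hmv hmv' v.2))
    _ = _ := by ring

end Probability

theorem covariance_bound_incomparable_general (pn : ℕ → ℝ)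
    (hp0 : ∀ n, 0 < pn n)
    (hlim : Filter.Tendsto pn Filter.atTop (nhds 0)) :
    ∃ N : ℕ, ∀ n ≥ N, ∀ u v : Vtx n,
      u.1.length < n → v.1.length < n →
      ¬ u.1 <+: v.1 → ¬ v.1 <+: u.1 →
      (treeMeasure n (pn n) (Xwet u ∩ Xwet v)).toReal ≤
          (treeMeasure n (pn n) (Xwet u)).toReal *
            (treeMeasure n (pn n) (Xwet v)).toReal +
          (u.1.length + v.1.length - 2 * (lcp u.1 v.1).length : ℕ) *
            rho (pn n) (n - (lcp u.1 v.1).length) ∧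
      (treeMeasure n (pn n) (Xwet u ∩ Xwet v)).toReal -
          (treeMeasure n (pn n) (Xwet u)).toReal *
            (treeMeasure n (pn n) (Xwet v)).toReal ≤
        (u.1.length + v.1.length - 2 * (lcp u.1 v.1).length : ℕ) *
          rho (pn n) (n - (lcp u.1 v.1).length) := by
  obtain ⟨N, hN⟩ := Filter.eventually_atTop.mp
    (hlim.eventually_lt_const (by norm_num : (0 : ℝ) < 1 / 5))
  refine ⟨N, fun n hn u v _ _ huv hvu => ?_⟩
  have h0 := (hp0 n).le
  have h5 := (hN n hn).le
  have hbound := treeMeasure_real_Xwet_inter_le h0 h5 huv hvu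
  have hd : (2 : ℝ) ≤ (u.1.length + v.1.length - 2 * (lcp u.1 v.1).length : ℕ) := by
    exact_mod_cast two_le_length_add_length_sub_lcp huv hvu
  have hρ := (rho_mem_Icc h0 (by linarith) (n - (lcp u.1 v.1).length)).1
  have := mul_le_mul_of_nonneg_right hd hρ
  simp only [measureReal_def] at hbound
  constructor <;> linarith

/-- **Covariance bound for incomparable vertices.**
If `p_n → 0`, then for `n` large enough and all non-leaf vertices `u, v` with
neither a prefix of the other,
`P(X_u ∩ X_v) ≤ P(X_u) P(X_v) + d(u,v) ρ_{ℓ(u ∨ v)}`; in particular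
`Cov(1_{X_u}, 1_{X_v}) ≤ d(u,v) ρ_{ℓ(u ∨ v)}`.  Here `u ∨ v` is the longest
common prefix of `u` and `v`, whose level is `n - |u ∨ v|`, and
`d(u,v) = |u| + |v| - 2 |u ∨ v|` is the graph distance in the tree. -/
theorem covariance_bound_incomparable (pn : ℕ → ℝ)
    (hp0 : ∀ n, 0 < pn n) (hp1 : ∀ n, pn n < 1)
    (hlim : Filter.Tendsto pn Filter.atTop (nhds 0)) :
    ∃ N : ℕ, ∀ n ≥ N, ∀ u v : Vtx n,
      u.1.length < n → v.1.length < n →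
      ¬ u.1 <+: v.1 → ¬ v.1 <+: u.1 →
      (treeMeasure n (pn n) (Xwet u ∩ Xwet v)).toReal ≤
          (treeMeasure n (pn n) (Xwet u)).toReal *
            (treeMeasure n (pn n) (Xwet v)).toReal +
          (u.1.length + v.1.length - 2 * (lcp u.1 v.1).length : ℕ) *
            rho (pn n) (n - (lcp u.1 v.1).length) ∧
      (treeMeasure n (pn n) (Xwet u ∩ Xwet v)).toReal -
          (treeMeasure n (pn n) (Xwet u)).toReal *
            (treeMeasure n (pn n) (Xwet v)).toReal ≤
        (u.1.length + v.1.length - 2 * (lcp u.1 v.1).length : ℕ) *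
          rho (pn n) (n - (lcp u.1 v.1).length) :=
  covariance_bound_incomparable_general pn hp0 hlim
end
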